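/- arXiv:1112.4541 — 2 statements merged into one kernel-verified Lean document; each statement's English description precedes it below -/
import Mathlib

section
/- Let $\mu$ be a Borel probability measure supported on a Borel set $F \subseteq \mathbb{R}^n$ and let $\lambda \in (0,\infty)$. If $\liminf_{r \to 0} \mu(B(x,r))\, r^{-s} \geq \lambda$ for all $x \in F$, then the packing measure satisfies $\mathcal{P}^s(F) \leq \lambda^{-1} 2^s$. -/
/-!
Fix `0 < λ < L`. Every point of `F` lies in one of the closed sets `G k` of points with
`μ(B(x,r)) ≥ λ r^s` for all `r < 1/(k+1)`. For `E ⊆ G k`, the balls of a centred `δ`-packing of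
`E` are disjoint and lie in the `δ`-neighbourhood of `E`, so the packing pre-measure of `E` is at
most `λ⁻¹ 2^s μ(closure E)`. Cutting an open `U ⊇ E` into shells of the distance to `Uᶜ` whose
frontiers are `μ`-null gives pieces whose closures have total measure at most `μ U`; with outer
regularity this yields `𝒫^s(E) ≤ λ⁻¹ 2^s μ(E)`. Summing over the disjointed `G k` and letting
`λ → L` gives the theorem.
-/

open Metric MeasureTheory Filter Set
open scoped ENNReal NNReal

/-- Packing pre-measure with respect to the gauge `G` (applied to the diameters `2r`
of the balls of a countable centred `δ`-packing), as `δ → 0`. -/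
noncomputable def packingPre {K : Type*} [MetricSpace K] (G : ℝ → ℝ) (F : Set K) : ℝ≥0∞ :=
  ⨅ (δ : ℝ) (_ : 0 < δ),
    ⨆ (s : Set ℕ) (c : ℕ → K) (r : ℕ → ℝ)
      (_ : ∀ n ∈ s, c n ∈ F ∧ 0 < r n ∧ 2 * r n ≤ δ)
      (_ : s.PairwiseDisjoint fun n => Metric.closedBall (c n) (r n)),
      ∑' n : s, ENNReal.ofReal (G (2 * r n))

/-- Packing measure with respect to the gauge `G`. -/
noncomputable def packingMeasure {K : Type*} [MetricSpace K] (G : ℝ → ℝ) (F : Set K) : ℝ≥0∞ :=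
  ⨅ (E : ℕ → Set K) (_ : F ⊆ ⋃ n, E n), ∑' n, packingPre G (E n)

/-- Packing dimension, defined from the packing measures `𝒫^s`. -/
noncomputable def packingDim {K : Type*} [MetricSpace K] (F : Set K) : ℝ≥0∞ :=
  ⨆ (s : ℝ) (_ : 0 ≤ s) (_ : packingMeasure (fun t => t ^ s) F = ⊤), ENNReal.ofReal s

open Topology

theorem packingPre_empty {X : Type*} [MetricSpace X] (G : ℝ → ℝ) :
    packingPre G (∅ : Set X) = 0 := by
  refine le_antisymm (iInf₂_le_of_le 1 one_pos ?_) bot_le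
  refine iSup_le fun p => iSup_le fun c => iSup_le fun r => iSup_le fun hp => iSup_le fun _ => ?_
  obtain rfl : p = ∅ := eq_empty_of_forall_notMem fun n hn => (hp n hn).1
  simp

theorem packingMeasure_eq_ofFunction {X : Type*} [MetricSpace X] (G : ℝ → ℝ) :
    packingMeasure (K := X) G = OuterMeasure.ofFunction (packingPre G) (packingPre_empty G) := by
  ext F
  rw [OuterMeasure.ofFunction_apply]
  rfl

theorem exists_iUnion_eq_tsum_measure_closure_le {X : Type*} [PseudoMetricSpace X]
    [MeasurableSpace X] [OpensMeasurableSpace X] (μ : Measure X) [SFinite μ] {U : Set X}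
    (hU : IsOpen U) : ∃ V : ℕ → Set X, ⋃ m, V m = U ∧ ∑' m, μ (closure (V m)) ≤ μ U := by
  obtain ⟨r, hr_lim, hr⟩ := exists_null_frontiers_thickening μ Uᶜ
  set K : ℕ → Set X := fun m => (thickening (r m) Uᶜ)ᶜ
  have hK_closed (m : ℕ) : IsClosed (K m) := isOpen_thickening.isClosed_compl
  have hK_union : ⋃ m, K m = U := by
    refine Subset.antisymm (iUnion_subset fun m => ?_) fun x hx => ?_
    · exact compl_subset_comm.1 (self_subset_thickening (hr m).1 _)
    · have hx_pos : 0 < infEDist x Uᶜ := by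
        rwa [infEDist_pos_iff_notMem_closure, hU.isClosed_compl.closure_eq, notMem_compl_iff]
      obtain ⟨m, hm⟩ := ((ENNReal.tendsto_ofReal hr_lim).eventually_lt_const
        (by simpa using hx_pos)).exists
      exact mem_iUnion.2 ⟨m, by simpa [K, mem_thickening_iff_infEDist_lt] using hm.le⟩
  set N := ⋃ m, frontier (K m)
  have hN : μ N = 0 := measure_iUnion_null fun m => by simpa [K, frontier_compl] using (hr m).2
  have hK_N (i : ℕ) : frontier (K i) ⊆ N := subset_iUnion (fun m => frontier (K m)) i
  have h_frontier (m : ℕ) : frontier (disjointed K m) ⊆ N := by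
    refine disjointedRec (p := fun t => frontier t ⊆ N) (fun t i ht => ?_) (hK_N m)
    rw [sdiff_eq]
    refine (frontier_inter_subset _ _).trans (union_subset ?_ ?_)
    · exact inter_subset_left.trans ht
    · exact inter_subset_right.trans ((frontier_compl _).trans_subset (hK_N i))
  refine ⟨disjointed K, by rw [iUnion_disjointed, hK_union], ?_⟩
  calc ∑' m, μ (closure (disjointed K m)) ≤ ∑' m, μ (disjointed K m) := by
        refine ENNReal.tsum_le_tsum fun m => ?_
        rw [closure_eq_self_union_frontier]
        exact (measure_union_le _ _).trans (by rw [measure_mono_null (h_frontier m) hN, add_zero])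
    _ = μ U := by
        rw [← measure_iUnion (disjoint_disjointed K)
          (MeasurableSet.disjointed fun m => (hK_closed m).measurableSet),
          iUnion_disjointed, hK_union]

theorem packingMeasure_le_mul_measure_of_packingPre_le {X : Type*} [MetricSpace X]
    [MeasurableSpace X] [BorelSpace X] (μ : Measure X) [IsFiniteMeasure μ] (G : ℝ → ℝ)
    {A : Set X} {c : ℝ≥0∞} (hc : c ≠ ∞) (hA : ∀ E ⊆ A, packingPre G E ≤ c * μ (closure E)) :
    packingMeasure G A ≤ c * μ A := by
  refine ENNReal.le_mul_of_forall_lt (Or.inr (measure_ne_top μ A)) (Or.inl hc)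
    fun c' hc' b hb => ?_
  obtain ⟨U, hAU, hU, hUb⟩ := A.exists_isOpen_lt_of_lt b hb
  obtain ⟨V, hVU, hV⟩ := exists_iUnion_eq_tsum_measure_closure_le μ hU
  calc packingMeasure G A ≤ ∑' m, packingPre G (A ∩ V m) := by
        refine iInf₂_le (fun m => A ∩ V m) fun x hx => ?_
        rw [← inter_iUnion, hVU]
        exact ⟨hx, hAU hx⟩
    _ ≤ ∑' m, c * μ (closure (V m)) := by
        refine ENNReal.tsum_le_tsum fun m => (hA _ inter_subset_left).trans ?_
        gcongr
        exact inter_subset_right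
    _ ≤ c' * b := by
        rw [ENNReal.tsum_mul_left]
        gcongr
        exact hV.trans hUb.le

theorem packingPre_rpow_le_mul_measure_cthickening {X : Type*} [MetricSpace X]
    [MeasurableSpace X] [OpensMeasurableSpace X] (μ : Measure X) {E : Set X} {s l δ : ℝ}
    (hl : 0 < l) (hE : ∀ x ∈ E, ∀ r, 0 < r → 2 * r ≤ δ →
      ENNReal.ofReal (l * r ^ s) ≤ μ (closedBall x r)) (hδ : 0 < δ) :
    packingPre (· ^ s) E ≤ ENNReal.ofReal (l⁻¹ * 2 ^ s) * μ (cthickening δ E) := by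
  refine iInf₂_le_of_le δ hδ <| iSup_le fun p => iSup_le fun c => iSup_le fun r =>
    iSup_le fun hp => iSup_le fun hdisj => ?_
  have hterm (n : p) : ENNReal.ofReal ((2 * r n) ^ s) ≤
      ENNReal.ofReal (l⁻¹ * 2 ^ s) * μ (closedBall (c n) (r n)) := by
    obtain ⟨hc, hr, hrδ⟩ := hp n n.2
    calc ENNReal.ofReal ((2 * r n) ^ s)
        = ENNReal.ofReal (l⁻¹ * 2 ^ s) * ENNReal.ofReal (l * r n ^ s) := by
          rw [← ENNReal.ofReal_mul (by positivity), Real.mul_rpow zero_le_two hr.le]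
          field_simp
      _ ≤ _ := by gcongr; exact hE _ hc _ hr hrδ
  calc ∑' n : p, ENNReal.ofReal ((2 * r n) ^ s)
      ≤ ∑' n : p, ENNReal.ofReal (l⁻¹ * 2 ^ s) * μ (closedBall (c n) (r n)) :=
        ENNReal.tsum_le_tsum hterm
    _ = ENNReal.ofReal (l⁻¹ * 2 ^ s) * μ (⋃ n ∈ p, closedBall (c n) (r n)) := by
        rw [ENNReal.tsum_mul_left,
          measure_biUnion p.to_countable hdisj fun n _ => measurableSet_closedBall]
    _ ≤ ENNReal.ofReal (l⁻¹ * 2 ^ s) * μ (cthickening δ E) := by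
        refine mul_le_mul_right (measure_mono (iUnion₂_subset fun n hn => ?_)) _
        obtain ⟨hc, -, hrδ⟩ := hp n hn
        exact (closedBall_subset_closedBall (by linarith)).trans
          (closedBall_subset_cthickening hc δ)

theorem packingPre_rpow_le_mul_measure_closure {X : Type*} [MetricSpace X]
    [MeasurableSpace X] [OpensMeasurableSpace X] (μ : Measure X) [IsFiniteMeasure μ]
    {E : Set X} {s l ρ : ℝ} (hl : 0 < l) (hρ : 0 < ρ)
    (hE : ∀ x ∈ E, ∀ r ∈ Ioo 0 ρ, ENNReal.ofReal (l * r ^ s) ≤ μ (closedBall x r)) :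
    packingPre (· ^ s) E ≤ ENNReal.ofReal (l⁻¹ * 2 ^ s) * μ (closure E) := by
  have h_lim : Tendsto (fun δ => ENNReal.ofReal (l⁻¹ * 2 ^ s) * μ (cthickening δ E)) (𝓝[>] 0)
      (𝓝 (ENNReal.ofReal (l⁻¹ * 2 ^ s) * μ (closure E))) :=
    ENNReal.Tendsto.const_mul
      ((tendsto_measure_cthickening ⟨1, one_pos, measure_ne_top μ _⟩).mono_left
        nhdsWithin_le_nhds) (Or.inr ENNReal.ofReal_ne_top)
  refine ge_of_tendsto h_lim ?_
  filter_upwards [Ioo_mem_nhdsGT hρ] with δ ⟨hδ, hδρ⟩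
  exact packingPre_rpow_le_mul_measure_cthickening μ hl
    (fun x hx r hr hrδ => hE x hx r ⟨hr, by linarith⟩) hδ

theorem isClosed_setOf_forall_le_measure_closedBall {X : Type*} [MetricSpace X]
    [MeasurableSpace X] (μ : Measure X) {φ : ℝ → ℝ≥0∞} (hφ : ContinuousOn φ (Ioi 0)) (ρ : ℝ) :
    IsClosed {x | ∀ r ∈ Ioo 0 ρ, φ r ≤ μ (closedBall x r)} := by
  refine isClosed_of_closure_subset fun x hx r ⟨hr, hrρ⟩ => ?_
  have h_lim : Tendsto φ (𝓝[<] r) (𝓝 (φ r)) :=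
    (hφ.continuousAt (Ioi_mem_nhds hr)).tendsto.mono_left nhdsWithin_le_nhds
  refine le_of_tendsto h_lim ?_
  filter_upwards [Ioo_mem_nhdsLT hr] with r' ⟨hr', hr'r⟩
  obtain ⟨y, hy, hxy⟩ := Metric.mem_closure_iff.1 hx (r - r') (by linarith)
  exact (hy r' ⟨hr', hr'r.trans hrρ⟩).trans
    (measure_mono (closedBall_subset_closedBall' (by rw [dist_comm]; linarith)))

theorem packingMeasure_rpow_le_mul_measure {X : Type*} [MetricSpace X]
    [MeasurableSpace X] [BorelSpace X] (μ : Measure X) [IsFiniteMeasure μ]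
    {A : Set X} {s l ρ : ℝ} (hl : 0 < l) (hρ : 0 < ρ)
    (hA : ∀ x ∈ A, ∀ r ∈ Ioo 0 ρ, ENNReal.ofReal (l * r ^ s) ≤ μ (closedBall x r)) :
    packingMeasure (· ^ s) A ≤ ENNReal.ofReal (l⁻¹ * 2 ^ s) * μ A :=
  packingMeasure_le_mul_measure_of_packingPre_le μ _ ENNReal.ofReal_ne_top fun _E hE =>
    packingPre_rpow_le_mul_measure_closure μ hl hρ fun x hx => hA x (hE hx)

theorem packingMeasure_rpow_le_mul_measure_of_eventually {X : Type*} [MetricSpace X]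
    [MeasurableSpace X] [BorelSpace X] (μ : Measure X) [IsFiniteMeasure μ]
    {F : Set X} {s l : ℝ} (hl : 0 < l)
    (hF : ∀ x ∈ F, ∀ᶠ r in 𝓝[>] 0, ENNReal.ofReal (l * r ^ s) ≤ μ (closedBall x r)) :
    packingMeasure (· ^ s) F ≤ ENNReal.ofReal (l⁻¹ * 2 ^ s) * μ F := by
  set G : ℕ → Set X := fun k =>
    {x | ∀ r ∈ Ioo 0 (1 / ((k : ℝ) + 1)), ENNReal.ofReal (l * r ^ s) ≤ μ (closedBall x r)}
  have hφ : ContinuousOn (fun r : ℝ => ENNReal.ofReal (l * r ^ s)) (Ioi 0) := fun r hr =>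
    (ENNReal.continuous_ofReal.continuousAt.comp
      ((Real.continuousAt_rpow_const r s (Or.inl (ne_of_gt hr))).const_mul l)).continuousWithinAt
  have hG_meas (k : ℕ) : MeasurableSet (G k) :=
    (isClosed_setOf_forall_le_measure_closedBall μ hφ _).measurableSet
  have hFG : F ⊆ ⋃ k, G k := fun x hx => by
    obtain ⟨η, hη : 0 < η, hsub⟩ := mem_nhdsGT_iff_exists_Ioo_subset.1 (hF x hx)
    obtain ⟨k, hk⟩ := exists_nat_one_div_lt hη
    exact mem_iUnion.2 ⟨k, fun r hr => hsub ⟨hr.1, hr.2.trans hk⟩⟩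
  -- `F` need not be measurable, but its measurable hull `T` splits additively along `disjointed G`.
  set T := toMeasurable μ F
  have hP := packingMeasure_eq_ofFunction (X := X) (· ^ s)
  calc packingMeasure (· ^ s) F ≤ packingMeasure (· ^ s) (⋃ k, disjointed G k ∩ T) := by
        rw [hP, ← iUnion_inter, iUnion_disjointed]
        exact measure_mono (subset_inter hFG (subset_toMeasurable μ F))
    _ ≤ ∑' k, packingMeasure (· ^ s) (disjointed G k ∩ T) := by
        rw [hP]
        exact measure_iUnion_le _
    _ ≤ ∑' k, ENNReal.ofReal (l⁻¹ * 2 ^ s) * μ (disjointed G k ∩ T) :=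
        ENNReal.tsum_le_tsum fun k => packingMeasure_rpow_le_mul_measure μ hl (by positivity)
          fun x hx => disjointed_subset G k hx.1
    _ = ENNReal.ofReal (l⁻¹ * 2 ^ s) * μ (⋃ k, disjointed G k ∩ T) := by
        rw [ENNReal.tsum_mul_left, measure_iUnion
          ((disjoint_disjointed G).mono fun _ _ h => h.mono inter_subset_left inter_subset_left)
          fun k => (MeasurableSet.disjointed hG_meas k).inter (measurableSet_toMeasurable μ F)]
    _ ≤ ENNReal.ofReal (l⁻¹ * 2 ^ s) * μ F := by
        rw [← measure_toMeasurable F]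
        gcongr
        exact iUnion_subset fun k => inter_subset_right

theorem eventually_le_measure_closedBall_of_lt_liminf {X : Type*} [MetricSpace X]
    [MeasurableSpace X] (μ : Measure X) {x : X} {s l : ℝ} (hl : 0 ≤ l)
    (h : ENNReal.ofReal l <
      liminf (fun r : ℝ => μ (closedBall x r) / ENNReal.ofReal (r ^ s)) (𝓝[>] 0)) :
    ∀ᶠ r in 𝓝[>] 0, ENNReal.ofReal (l * r ^ s) ≤ μ (closedBall x r) := by
  filter_upwards [eventually_lt_of_lt_liminf h, self_mem_nhdsWithin] with r hr (hr0 : 0 < r)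
  rw [ENNReal.ofReal_mul hl]
  exact (ENNReal.le_div_iff_mul_le
    (Or.inl (ENNReal.ofReal_pos.2 (Real.rpow_pos_of_pos hr0 s)).ne')
    (Or.inl ENNReal.ofReal_ne_top)).1 hr.le

theorem mass_distribution_principle_packing_general (n : ℕ)
    (μ : Measure (EuclideanSpace ℝ (Fin n))) [IsProbabilityMeasure μ]
    (F : Set (EuclideanSpace ℝ (Fin n)))
    (s : ℝ) (L : ℝ) (hL : 0 < L)
    (h : ∀ x ∈ F,
      ENNReal.ofReal L ≤
        Filter.liminf (fun r : ℝ => μ (Metric.closedBall x r) / ENNReal.ofReal (r ^ s))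
          (nhdsWithin 0 (Set.Ioi 0))) :
    packingMeasure (fun t => t ^ s) F ≤ ENNReal.ofReal (L⁻¹ * 2 ^ s) := by
  have h_bound : ∀ l ∈ Ioo 0 L, packingMeasure (fun t => t ^ s) F ≤ ENNReal.ofReal (l⁻¹ * 2 ^ s) :=
    fun l ⟨hl, hlL⟩ => calc
      packingMeasure (fun t => t ^ s) F ≤ ENNReal.ofReal (l⁻¹ * 2 ^ s) * μ F :=
        packingMeasure_rpow_le_mul_measure_of_eventually μ hl fun x hx =>
          eventually_le_measure_closedBall_of_lt_liminf μ hl.le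
            (((ENNReal.ofReal_lt_ofReal_iff hL).2 hlL).trans_le (h x hx))
      _ ≤ ENNReal.ofReal (l⁻¹ * 2 ^ s) := mul_le_of_le_one_right' prob_le_one
  have h_lim : Tendsto (fun l => ENNReal.ofReal (l⁻¹ * 2 ^ s)) (𝓝[<] L)
      (𝓝 (ENNReal.ofReal (L⁻¹ * 2 ^ s))) :=
    ENNReal.tendsto_ofReal
      (((continuousAt_inv₀ hL.ne').tendsto.mul_const _).mono_left nhdsWithin_le_nhds)
  exact ge_of_tendsto h_lim (eventually_of_mem (Ioo_mem_nhdsLT hL) h_bound)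

/-- Mass distribution principle for packing measure: if
`liminf_{r→0} μ(B(x,r)) r⁻ˢ ≥ λ` for all `x ∈ F`, then `𝒫^s(F) ≤ λ⁻¹ 2^s`. -/
theorem mass_distribution_principle_packing (n : ℕ)
    (μ : Measure (EuclideanSpace ℝ (Fin n))) [IsProbabilityMeasure μ]
    (F : Set (EuclideanSpace ℝ (Fin n))) (hF : MeasurableSet F) (hsupp : μ Fᶜ = 0)
    (s : ℝ) (hs : 0 ≤ s) (L : ℝ) (hL : 0 < L)
    (h : ∀ x ∈ F,
      ENNReal.ofReal L ≤
        Filter.liminf (fun r : ℝ => μ (Metric.closedBall x r) / ENNReal.ofReal (r ^ s))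
          (nhdsWithin 0 (Set.Ioi 0))) :
    packingMeasure (fun t => t ^ s) F ≤ ENNReal.ofReal (L⁻¹ * 2 ^ s) :=
  mass_distribution_principle_packing_general n μ F s L hL h
end

section
/- Let $\mathbb{I} = \{\mathbb{I}_1, \dots, \mathbb{I}_N\}$ be a RIFS of bi-Lipschitz contractions on a compact metric space $K$, with random attractors $F_\omega$ for $\omega \in \Omega = \{1,\dots,N\}^{\mathbb{N}}$. Let $G$ be a gauge function. If $\inf_{u \in \Omega} \mathcal{H}^G(F_u) = 0$, then the set $\{\omega \in \Omega : \mathcal{H}^G(F_\omega) = 0\}$ is residual in $(\Omega, d_\Omega)$; i.e., for a typical $\omega$, $\mathcal{H}^G(F_\omega) = 0$. -/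
open Metric MeasureTheory Filter Set
open scoped ENNReal NNReal

/-- A gauge function: continuous, monotone increasing and positive on `(0,∞)`,
with `G(t) → 0` as `t → 0⁺`. -/
def IsGauge (G : ℝ → ℝ) : Prop :=
  ContinuousOn G (Set.Ioi 0) ∧ MonotoneOn G (Set.Ioi 0) ∧ (∀ t, 0 < t → 0 < G t) ∧
    Filter.Tendsto G (nhdsWithin 0 (Set.Ioi 0)) (nhds 0)

/-- Hausdorff measure with respect to the gauge `G`. -/
noncomputable def hausdorffG {K : Type*} [MetricSpace K] [MeasurableSpace K] [BorelSpace K]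
    (G : ℝ → ℝ) : MeasureTheory.Measure K :=
  MeasureTheory.Measure.mkMetric (fun d => ENNReal.ofReal (G d.toReal))

/-- The level-`k` approximation of the random attractor: the union over all length-`k`
words `(i₁,…,i_k)` with `i_l ∈ 𝓘_{ω_l}` of `S_{ω₁,i₁} ∘ ⋯ ∘ S_{ω_k,i_k}(K₀)`. -/
def levelSets {X : Type*} {N : ℕ} (m : Fin N → ℕ) (S : ∀ i, Fin (m i) → X → X) (K₀ : Set X) :
    (ℕ → Fin N) → ℕ → Set X
  | _, 0 => K₀
  | ω, k+1 => ⋃ j : Fin (m (ω 0)), S (ω 0) j '' levelSets m S K₀ (fun n => ω (n+1)) k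

/-- The random attractor `F_ω = ⋂_k ⋃_{i₁,…,i_k} S_{ω₁,i₁} ∘ ⋯ ∘ S_{ω_k,i_k}(K₀)`. -/
def attractorOf {X : Type*} {N : ℕ} (m : Fin N → ℕ) (S : ∀ i, Fin (m i) → X → X)
    (K₀ : Set X) (ω : ℕ → Fin N) : Set X :=
  ⋂ k, levelSets m S K₀ ω k

/-- `φ` is a bi-Lipschitz contraction. -/
def IsBiLipContraction {K : Type*} [MetricSpace K] (φ : K → K) : Prop :=
  ∃ c C : ℝ, 0 < c ∧ C < 1 ∧
    ∀ x y, c * dist x y ≤ dist (φ x) (φ y) ∧ dist (φ x) (φ y) ≤ C * dist x y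

/-!
For `n : ℕ` let `Uₙ` be the set of `ω` such that some level set of `F_ω` has a cover of mesh and
`G`-sum at most `1 / (n + 1)`. A level set only depends on finitely many coordinates of `ω`, so
`Uₙ` is open, and `⋂ Uₙ` consists of sequences with `𝓗^G(F_ω) = 0`. Each `Uₙ` is dense: by
hypothesis some `F_u` has covers of arbitrarily small `G`-sum; continuity of `G` lets us thicken
such a cover into an open one at a small extra cost, and by compactness the open cover contains a
level set of `u`. Prefixing a finite word `w₁ ⋯ w_k` to `u` replaces a cover by its images under
the finitely many maps `S_{w_i, j}`; these are `1`-Lipschitz and injective, so they do not increase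
the cost of a set, and the total cost grows by at most a factor `∏ |𝓘_{w_i}|`, which is absorbed
by starting from a cover of `F_u` that is cheap enough. Baire's theorem concludes.
-/

open Topology PiNat

section BiLipschitz

variable {X : Type*} [MetricSpace X] {φ : X → X}

theorem IsBiLipContraction.lipschitzWith_one (hφ : IsBiLipContraction φ) :
    LipschitzWith 1 φ := by
  obtain ⟨c, C, -, hC, h⟩ := hφ
  refine LipschitzWith.of_dist_le_mul fun x y => ?_
  have := (h x y).2
  have := dist_nonneg (x := x) (y := y)
  push_cast
  nlinarith

theorem IsBiLipContraction.injective (hφ : IsBiLipContraction φ) : Function.Injective φ := by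
  obtain ⟨c, C, hc, -, h⟩ := hφ
  intro x y hxy
  have := (h x y).1
  rw [hxy, dist_self] at this
  exact dist_le_zero.1 (nonpos_of_mul_nonpos_right this hc)

end BiLipschitz

/-- What a set `t` contributes to the `G`-sum of a cover, as in `Measure.mkMetric_apply`:
nothing if `t` is empty, otherwise `G (diam t)`. -/
noncomputable def gaugeCost {X : Type*} [PseudoEMetricSpace X] (G : ℝ → ℝ) (t : Set X) : ℝ≥0∞ :=
  ⨆ _ : t.Nonempty, ENNReal.ofReal (G (ediam t).toReal)

def HasGaugeCover {X : Type*} [PseudoEMetricSpace X] (G : ℝ → ℝ) (r ε : ℝ≥0∞) (s : Set X) :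
    Prop :=
  ∃ t : ℕ → Set X, s ⊆ ⋃ n, t n ∧ (∀ n, ediam (t n) ≤ r) ∧ ∑' n, gaugeCost G (t n) ≤ ε

section GaugeCover

variable {X : Type*} [PseudoEMetricSpace X] {G : ℝ → ℝ} {r r' ε ε' : ℝ≥0∞} {s s' t : Set X}

@[simp]
theorem gaugeCost_empty (G : ℝ → ℝ) : gaugeCost G (∅ : Set X) = 0 := by
  simp [gaugeCost]

theorem gaugeCost_of_nonempty (ht : t.Nonempty) :
    gaugeCost G t = ENNReal.ofReal (G (ediam t).toReal) := by
  simp [gaugeCost, ht]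

theorem HasGaugeCover.mono (h : HasGaugeCover G r ε s) (hs : s' ⊆ s) (hr : r ≤ r')
    (hε : ε ≤ ε') : HasGaugeCover G r' ε' s' :=
  let ⟨t, hst, hdiam, hsum⟩ := h
  ⟨t, hs.trans hst, fun n => (hdiam n).trans hr, hsum.trans hε⟩

theorem hasGaugeCover_of_countable {ι : Type*} [Countable ι] (t : ι → Set X)
    (hst : s ⊆ ⋃ i, t i) (hdiam : ∀ i, ediam (t i) ≤ r) (hsum : ∑' i, gaugeCost G (t i) ≤ ε) :
    HasGaugeCover G r ε s := by
  obtain ⟨e, he⟩ := Countable.exists_injective_nat ι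
  refine ⟨Function.extend e t fun _ => ∅, fun x hx => ?_, fun n => ?_, ?_⟩
  · obtain ⟨i, hi⟩ := mem_iUnion.1 (hst hx)
    exact mem_iUnion.2 ⟨e i, by rwa [he.extend_apply]⟩
  · by_cases hn : ∃ i, e i = n
    · obtain ⟨i, rfl⟩ := hn
      rw [he.extend_apply]
      exact hdiam i
    · simp [Function.extend_apply' _ _ _ hn]
  · simp only [Function.apply_extend (gaugeCost G), Function.comp_def, gaugeCost_empty]
    exact (tsum_extend_zero he _).trans_le hsum

end GaugeCover

section Image

variable {X Y : Type*} [PseudoEMetricSpace X] [EMetricSpace Y] {G : ℝ → ℝ} {r ε : ℝ≥0∞}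
  {s t : Set X}

theorem gaugeCost_image_le (hG : MonotoneOn G (Ioi 0)) {φ : X → Y} (hφ : LipschitzWith 1 φ)
    (hinj : Function.Injective φ) (ht : ediam t ≠ ∞) : gaugeCost G (φ '' t) ≤ gaugeCost G t := by
  rcases t.eq_empty_or_nonempty with rfl | hne
  · simp
  rw [gaugeCost_of_nonempty (hne.image φ), gaugeCost_of_nonempty hne]
  have hle : ediam (φ '' t) ≤ ediam t := by simpa using hφ.ediam_image_le t
  rcases eq_or_ne (ediam (φ '' t)) 0 with h0 | h0
  · -- `G` is only monotone on `(0, ∞)`; injectivity makes both diameters vanish together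
    rw [h0, ediam_subsingleton (hinj.subsingleton_image_iff.1 (ediam_eq_zero_iff.1 h0))]
  · have hpos : 0 < (ediam (φ '' t)).toReal := ENNReal.toReal_pos h0 (ne_top_of_le_ne_top ht hle)
    have hmono := ENNReal.toReal_mono ht hle
    exact ENNReal.ofReal_le_ofReal (hG hpos (hpos.trans_le hmono) hmono)

theorem HasGaugeCover.iUnion_image {ι : Type*} [Fintype ι] (hG : MonotoneOn G (Ioi 0))
    {φ : ι → X → Y} (hφ : ∀ j, LipschitzWith 1 (φ j)) (hinj : ∀ j, Function.Injective (φ j))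
    (hr : r ≠ ∞) (h : HasGaugeCover G r ε s) :
    HasGaugeCover G r (Fintype.card ι * ε) (⋃ j, φ j '' s) := by
  obtain ⟨t, hst, hdiam, hsum⟩ := h
  refine hasGaugeCover_of_countable (fun p : ℕ × ι => φ p.2 '' t p.1) ?_ ?_ ?_
  · refine iUnion_subset fun j => ?_
    rw [image_subset_iff]
    refine hst.trans (iUnion_subset fun n x hx => ?_)
    exact mem_iUnion.2 ⟨(n, j), mem_image_of_mem _ hx⟩
  · rintro ⟨n, j⟩
    exact ((hφ j).ediam_image_le _).trans (by simpa using hdiam n)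
  · calc ∑' p : ℕ × ι, gaugeCost G (φ p.2 '' t p.1)
        = ∑' n, ∑' j, gaugeCost G (φ j '' t n) :=
          ENNReal.tsum_prod (f := fun n j => gaugeCost G (φ j '' t n))
      _ ≤ ∑' n, ∑' _ : ι, gaugeCost G (t n) :=
          ENNReal.tsum_le_tsum fun n => ENNReal.tsum_le_tsum fun j =>
            gaugeCost_image_le hG (hφ j) (hinj j) (ne_top_of_le_ne_top hr (hdiam n))
      _ = Fintype.card ι * ∑' n, gaugeCost G (t n) := by
          simp [tsum_fintype, ENNReal.tsum_mul_left]
      _ ≤ Fintype.card ι * ε := by gcongr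

end Image

theorem hasGaugeCover_of_hausdorffG_lt {X : Type*} [MetricSpace X] [MeasurableSpace X]
    [BorelSpace X] {G : ℝ → ℝ} {r ε : ℝ≥0∞} {s : Set X} (hs : hausdorffG G s < ε) (hr : 0 < r) :
    HasGaugeCover G r ε s := by
  rw [hausdorffG, Measure.mkMetric_apply] at hs
  have := (le_iSup₂ (α := ℝ≥0∞) r hr).trans_lt hs
  simp only [iInf_lt_iff, exists_prop] at this
  obtain ⟨t, hst, hdiam, hsum⟩ := this
  exact ⟨t, hst, hdiam, hsum.le⟩

theorem hausdorffG_eq_zero_of_forall_hasGaugeCover {X : Type*} [MetricSpace X]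
    [MeasurableSpace X] [BorelSpace X] {G : ℝ → ℝ} {s : Set X}
    (h : ∀ ε > 0, HasGaugeCover G ε ε s) : hausdorffG G s = 0 := by
  rw [hausdorffG, Measure.mkMetric_apply, ← nonpos_iff_eq_zero]
  refine iSup₂_le fun r hr => ENNReal.le_of_forall_pos_le_add fun c hc _ => ?_
  obtain ⟨t, hst, hdiam, hsum⟩ := h (min r c) (lt_min hr (by exact_mod_cast hc))
  refine iInf₂_le_of_le t hst (iInf_le_of_le (fun n => (hdiam n).trans (min_le_left _ _)) ?_)
  exact hsum.trans ((min_le_right _ _).trans (le_of_eq (zero_add _).symm))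

section Thickening

variable {G : ℝ → ℝ}

theorem eventually_ofReal_lt_ofReal_add (hGc : ContinuousOn G (Ioi 0))
    (hG0 : Tendsto G (𝓝[>] 0) (𝓝 0)) {x : ℝ} (hx : 0 ≤ x) {δ : ℝ≥0∞} (hδ : 0 < δ) :
    ∀ᶠ y in 𝓝[≥] x, ENNReal.ofReal (G y) < ENNReal.ofReal (G x) + δ := by
  have hlt : ENNReal.ofReal (G x) < ENNReal.ofReal (G x) + δ :=
    ENNReal.lt_add_right ENNReal.ofReal_ne_top hδ.ne'
  rw [← Ioi_insert, nhdsWithin_insert, eventually_sup, eventually_pure]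
  refine ⟨hlt, ?_⟩
  obtain ⟨L, hL, hGL⟩ : ∃ L ≤ ENNReal.ofReal (G x),
      Tendsto (fun y => ENNReal.ofReal (G y)) (𝓝[>] x) (𝓝 L) := by
    rcases hx.eq_or_lt with rfl | hx
    · refine ⟨0, zero_le, ?_⟩
      have := (ENNReal.continuous_ofReal.tendsto 0).comp hG0
      rwa [ENNReal.ofReal_zero] at this
    · exact ⟨_, le_rfl, (ENNReal.continuous_ofReal.tendsto _).comp
        ((hGc x hx).mono_left (nhdsWithin_mono _ (Ioi_subset_Ioi hx.le)))⟩
  exact hGL.eventually (gt_mem_nhds (hL.trans_lt hlt))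

variable {X : Type*} [PseudoEMetricSpace X]

theorem exists_thickening_gaugeCost_le (hGc : ContinuousOn G (Ioi 0))
    (hG0 : Tendsto G (𝓝[>] 0) (𝓝 0)) {t : Set X} (ht : ediam t ≠ ∞) {ρ δ : ℝ≥0∞} (hρ : 0 < ρ)
    (hδ : 0 < δ) :
    ∃ η : ℝ≥0, 0 < η ∧ ediam (thickening η t) ≤ ediam t + ρ ∧
      gaugeCost G (thickening η t) ≤ gaugeCost G t + δ := by
  rcases t.eq_empty_or_nonempty with rfl | hne
  · exact ⟨1, one_pos, by simp, by simp⟩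
  have hsub : ∀ η : ℝ≥0, 0 < η → t ⊆ thickening η t := fun η hη =>
    self_subset_thickening (by exact_mod_cast hη) t
  have hD : Tendsto (fun η : ℝ≥0 => ediam (thickening η t)) (𝓝[>] 0) (𝓝 (ediam t)) := by
    have hcont : Continuous fun η : ℝ≥0 => ediam t + 2 * (η : ℝ≥0∞) :=
      continuous_const.add ((ENNReal.continuous_const_mul (by simp)).comp ENNReal.continuous_coe)
    refine tendsto_of_tendsto_of_tendsto_of_le_of_le' tendsto_const_nhds
      ((hcont.tendsto' 0 _ (by simp)).mono_left nhdsWithin_le_nhds)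
      (eventually_mem_nhdsWithin.mono fun η hη => ediam_mono (hsub η hη))
      (Eventually.of_forall fun η => ediam_thickening_le η)
  have hD' : Tendsto (fun η : ℝ≥0 => (ediam (thickening η t)).toReal) (𝓝[>] 0)
      (𝓝[≥] (ediam t).toReal) := by
    refine tendsto_nhdsWithin_iff.2 ⟨(ENNReal.tendsto_toReal ht).comp hD, ?_⟩
    filter_upwards [eventually_mem_nhdsWithin, hD.eventually (gt_mem_nhds ht.lt_top)]
      with η hη hfin
    exact ENNReal.toReal_mono hfin.ne (ediam_mono (hsub η hη))
  obtain ⟨η, hη, hcost, hdiam⟩ := (eventually_mem_nhdsWithin.and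
    ((hD'.eventually (eventually_ofReal_lt_ofReal_add hGc hG0 ENNReal.toReal_nonneg hδ)).and
      (hD.eventually (gt_mem_nhds (ENNReal.lt_add_right ht hρ.ne'))))).exists
  refine ⟨η, hη, hdiam.le, ?_⟩
  rw [gaugeCost_of_nonempty (hne.mono (hsub η hη)), gaugeCost_of_nonempty hne]
  exact hcost.le

end Thickening

theorem HasGaugeCover.exists_mem_nhdsSet {X : Type*} [PseudoEMetricSpace X] {G : ℝ → ℝ}
    (hGc : ContinuousOn G (Ioi 0)) (hG0 : Tendsto G (𝓝[>] 0) (𝓝 0)) {r r' ε ε' : ℝ≥0∞}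
    {s : Set X} (h : HasGaugeCover G r ε s) (hr : r < r') (hε : ε < ε') :
    ∃ U ∈ 𝓝ˢ s, HasGaugeCover G r' ε' U := by
  obtain ⟨t, hst, hdiam, hsum⟩ := h
  obtain ⟨δ, hδ, hδsum⟩ := ENNReal.exists_pos_sum_of_countable (tsub_pos_of_lt hε).ne' ℕ
  choose η hη hηdiam hηcost using fun n =>
    exists_thickening_gaugeCost_le hGc hG0 ((hdiam n).trans_lt hr).ne_top (tsub_pos_of_lt hr)
      (ENNReal.coe_pos.2 (hδ n))
  refine ⟨⋃ n, thickening (η n) (t n), ?_, fun n => thickening (η n) (t n), subset_rfl,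
    fun n => ?_, ?_⟩
  · refine (isOpen_iUnion fun n => isOpen_thickening).mem_nhdsSet.2 (hst.trans ?_)
    exact iUnion_mono fun n => self_subset_thickening (by exact_mod_cast hη n) _
  · calc ediam (thickening (η n) (t n)) ≤ ediam (t n) + (r' - r) := hηdiam n
      _ ≤ r + (r' - r) := by gcongr; exact hdiam n
      _ = r' := add_tsub_cancel_of_le hr.le
  · calc ∑' n, gaugeCost G (thickening (η n) (t n))
        ≤ ∑' n, (gaugeCost G (t n) + δ n) := ENNReal.tsum_le_tsum hηcost
      _ = ∑' n, gaugeCost G (t n) + ∑' n, (δ n : ℝ≥0∞) := ENNReal.tsum_add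
      _ ≤ ε + (ε' - ε) := add_le_add hsum hδsum.le
      _ = ε' := add_tsub_cancel_of_le hε.le

section LevelSets

variable {X : Type*} {N : ℕ} {m : Fin N → ℕ} {S : ∀ i, Fin (m i) → X → X} {K₀ : Set X}

theorem levelSets_eq_of_mem_cylinder {k : ℕ} {ω ω' : ℕ → Fin N} (h : ω' ∈ cylinder ω k) :
    levelSets m S K₀ ω' k = levelSets m S K₀ ω k := by
  induction k generalizing ω ω' with
  | zero => rfl
  | succ k ih =>
    rw [mem_cylinder_iff] at h
    have htail : levelSets m S K₀ (fun n => ω' (n + 1)) k =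
        levelSets m S K₀ (fun n => ω (n + 1)) k :=
      ih (mem_cylinder_iff.2 fun i hi => h (i + 1) (Nat.succ_lt_succ hi))
    simp only [levelSets, htail]
    rw [h 0 k.succ_pos]

theorem isOpen_setOf_exists_levelSets (P : Set X → Prop) :
    IsOpen {ω : ℕ → Fin N | ∃ k, P (levelSets m S K₀ ω k)} := by
  refine isOpen_iff_forall_mem_open.2 fun ω ⟨k, hk⟩ =>
    ⟨cylinder ω k, fun ω' hω' => ⟨k, ?_⟩, isOpen_cylinder _ ω k, self_mem_cylinder ω k⟩
  rwa [levelSets_eq_of_mem_cylinder hω']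

theorem levelSets_succ_subset (hK₀ : ∀ i j, MapsTo (S i j) K₀ K₀) (ω : ℕ → Fin N) (k : ℕ) :
    levelSets m S K₀ ω (k + 1) ⊆ levelSets m S K₀ ω k := by
  induction k generalizing ω with
  | zero => exact iUnion_subset fun j => (hK₀ _ j).image_subset
  | succ k ih => exact iUnion_mono fun j => image_mono (ih _)

theorem isCompact_levelSets [TopologicalSpace X] (hK₀ : IsCompact K₀)
    (hS : ∀ i j, Continuous (S i j)) (ω : ℕ → Fin N) (k : ℕ) :
    IsCompact (levelSets m S K₀ ω k) := by
  induction k generalizing ω with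
  | zero => exact hK₀
  | succ k ih => exact isCompact_iUnion fun j => (ih _).image (hS _ j)

theorem exists_levelSets_subset_of_mem_nhdsSet [TopologicalSpace X] [T2Space X]
    (hK₀ : IsCompact K₀) (hK₀S : ∀ i j, MapsTo (S i j) K₀ K₀) (hS : ∀ i j, Continuous (S i j))
    {ω : ℕ → Fin N} {U : Set X} (hU : U ∈ 𝓝ˢ (attractorOf m S K₀ ω)) :
    ∃ k, levelSets m S K₀ ω k ⊆ U :=
  exists_subset_nhds_of_isCompact'
    (antitone_nat_of_succ_le (levelSets_succ_subset hK₀S ω)).directed_ge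
    (isCompact_levelSets hK₀ hS ω) (fun k => (isCompact_levelSets hK₀ hS ω k).isClosed)
    (mem_nhdsSet_iff_forall.1 hU)

end LevelSets

theorem exists_mem_cylinder_hasGaugeCover_levelSets {K : Type*} [MetricSpace K]
    [MeasurableSpace K] [BorelSpace K] {N : ℕ} {m : Fin N → ℕ} {S : ∀ i, Fin (m i) → K → K}
    {K₀ : Set K} (hK₀ : IsCompact K₀) (hK₀S : ∀ i j, MapsTo (S i j) K₀ K₀)
    (hS : ∀ i j, IsBiLipContraction (S i j)) {G : ℝ → ℝ} (hG : IsGauge G)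
    (h0 : ⨅ u, hausdorffG G (attractorOf m S K₀ u) = 0) {r : ℝ≥0∞} (hr : 0 < r) (hr_top : r ≠ ∞)
    (k : ℕ) (w : ℕ → Fin N) {ε : ℝ≥0∞} (hε : 0 < ε) :
    ∃ ω ∈ cylinder w k, ∃ k', HasGaugeCover G r ε (levelSets m S K₀ ω k') := by
  obtain ⟨hGc, hGmono, -, hG0⟩ := hG
  induction k generalizing w ε with
  | zero =>
    obtain ⟨ε₀, hε₀, hε₀ε⟩ := exists_between hε
    obtain ⟨r₀, hr₀, hr₀r⟩ := exists_between hr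
    obtain ⟨u, hu⟩ := iInf_lt_iff.1 (h0.trans_lt hε₀)
    obtain ⟨U, hU, hcover⟩ :=
      (hasGaugeCover_of_hausdorffG_lt hu hr₀).exists_mem_nhdsSet hGc hG0 hr₀r hε₀ε
    obtain ⟨k', hk'⟩ := exists_levelSets_subset_of_mem_nhdsSet hK₀ hK₀S
      (fun i j => (hS i j).lipschitzWith_one.continuous) hU
    exact ⟨u, by simp [cylinder_zero], k', hcover.mono hk' le_rfl le_rfl⟩
  | succ k ih =>
    obtain ⟨ω, hω, k', hcover⟩ := ih (fun n => w (n + 1))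
      (ENNReal.div_pos hε.ne' (ENNReal.natCast_ne_top (m (w 0))))
    refine ⟨fun | 0 => w 0 | n + 1 => ω n, ?_, k' + 1, ?_⟩
    · rw [mem_cylinder_iff] at hω
      rintro (_ | i) hi
      · rfl
      · exact hω i (Nat.lt_of_succ_lt_succ hi)
    · have := hcover.iUnion_image hGmono (fun j => (hS (w 0) j).lipschitzWith_one)
        (fun j => (hS (w 0) j).injective) hr_top
      rw [Fintype.card_fin] at this
      exact this.mono subset_rfl le_rfl ENNReal.mul_div_le

theorem typical_hausdorffG_eq_zero_general {K : Type*} [MetricSpace K] [CompactSpace K]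
    [MeasurableSpace K] [BorelSpace K]
    {N : ℕ} (m : Fin N → ℕ)
    (S : ∀ i, Fin (m i) → K → K) (hS : ∀ i j, IsBiLipContraction (S i j))
    (G : ℝ → ℝ) (hG : IsGauge G)
    (h0 : (⨅ u : ℕ → Fin N, hausdorffG G (attractorOf m S Set.univ u)) = 0) :
    {ω : ℕ → Fin N | hausdorffG G (attractorOf m S Set.univ ω) = 0} ∈
      residual (ℕ → Fin N) := by
  let U (n : ℕ) : Set (ℕ → Fin N) :=
    {ω | ∃ k, HasGaugeCover G (n + 1 : ℝ≥0∞)⁻¹ (n + 1 : ℝ≥0∞)⁻¹ (levelSets m S univ ω k)}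
  have hdense (n : ℕ) : Dense (U n) := by
    refine (isTopologicalBasis_cylinders _).dense_iff.2 ?_
    rintro _ ⟨w, k, rfl⟩ -
    exact exists_mem_cylinder_hasGaugeCover_levelSets isCompact_univ (fun _ _ => mapsTo_univ _ _)
      hS hG h0 (by simp) (by simp) k w (by simp)
  refine mem_of_superset (countable_iInter_mem.2 fun n =>
    residual_of_dense_open (isOpen_setOf_exists_levelSets _) (hdense n)) fun ω hω => ?_
  refine hausdorffG_eq_zero_of_forall_hasGaugeCover fun ε hε => ?_
  obtain ⟨n, hn⟩ := ENNReal.exists_inv_nat_lt hε.ne'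
  obtain ⟨k, hk⟩ := mem_iInter.1 hω n
  have hle : (n + 1 : ℝ≥0∞)⁻¹ ≤ ε := (ENNReal.inv_le_inv.2 le_self_add).trans hn.le
  exact hk.mono (iInter_subset _ k) hle hle

/-- If the infimal `𝓗^G`-measure of the random attractors is `0`, then the set of `ω`
with `𝓗^G(F_ω) = 0` is residual. -/
theorem typical_hausdorffG_eq_zero {K : Type*} [MetricSpace K] [CompactSpace K] [Nonempty K]
    [MeasurableSpace K] [BorelSpace K]
    {N : ℕ} (hN : 0 < N) (m : Fin N → ℕ) (hm : ∀ i, 0 < m i)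
    (S : ∀ i, Fin (m i) → K → K) (hS : ∀ i j, IsBiLipContraction (S i j))
    (G : ℝ → ℝ) (hG : IsGauge G)
    (h0 : (⨅ u : ℕ → Fin N, hausdorffG G (attractorOf m S Set.univ u)) = 0) :
    {ω : ℕ → Fin N | hausdorffG G (attractorOf m S Set.univ ω) = 0} ∈
      residual (ℕ → Fin N) :=
  typical_hausdorffG_eq_zero_general m S hS G hG h0
end
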